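/- arXiv:2110.15093 — 2 statements merged into one kernel-verified Lean document; each statement's English description precedes it below -/
import Mathlib

section
/- For every initial state i, the optimal expected total cost equals the minimum over initial actions of the stage-0 DP Q-values: min over all policies π of J^π(i) = min_{a∈A} Q_0(i,a), where Q_0 is given by the DP backward recursion. -/
open Finset

noncomputable section

/-- The state at time `k` of the trajectory with initial state `i` and
subsequent states `τ 0, …, τ (N-1)` (so `traj N i τ k = s_k`). -/
def traj {S : Type*} (N : ℕ) (i : S) (τ : Fin N → S) : ℕ → S
  | 0 => i
  | m + 1 => if h : m < N then τ ⟨m, h⟩ else i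

/-- `J N p g gN pol i` is the expected total cost over the horizon `N`
when starting in state `i` and following the policy `pol`. -/
def J {S A : Type*} [Fintype S] [DecidableEq S] [Fintype A] (N : ℕ)
    (p g : ℕ → S → A → S → ℝ) (gN : S → ℝ) (pol : ℕ → S → A) (i : S) : ℝ :=
  ∑ τ : Fin N → S,
    (∏ k : Fin N, p k (traj N i τ k) (pol k (traj N i τ k)) (traj N i τ (k + 1))) *
      ((∑ k : Fin N, g k (traj N i τ k) (pol k (traj N i τ k)) (traj N i τ (k + 1)))
        + gN (traj N i τ N))

lemma traj_cons {S : Type*} (M : ℕ) (i j : S) (σ : Fin M → S) (k : ℕ) (hk : k ≤ M) :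
    traj (M + 1) i (Fin.cons j σ) (k + 1) = traj M j σ k := by
  match k with
  | 0 => simp [traj]
  | m + 1 =>
    have hm : m < M := by omega
    have h1 : m + 1 < M + 1 := by omega
    simp only [traj, dif_pos h1, dif_pos hm]
    have he : (⟨m + 1, h1⟩ : Fin (M + 1)) = Fin.succ ⟨m, hm⟩ := rfl
    rw [he, Fin.cons_succ]

lemma J_zero {S A : Type*} [Fintype S] [DecidableEq S] [Fintype A]
    (p g : ℕ → S → A → S → ℝ) (gN : S → ℝ) (pol : ℕ → S → A) (i : S) :
    J 0 p g gN pol i = gN i := by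
  simp [J, traj]

lemma prod_cons' {S A : Type*} [Fintype A] (M : ℕ) (p : ℕ → S → A → S → ℝ)
    (pol : ℕ → S → A) (i j : S) (σ : Fin M → S) :
    (∏ k : Fin (M + 1), p k (traj (M + 1) i (Fin.cons j σ) k)
        (pol k (traj (M + 1) i (Fin.cons j σ) k)) (traj (M + 1) i (Fin.cons j σ) (k + 1)))
      = p 0 i (pol 0 i) j *
        ∏ k : Fin M, p (k + 1) (traj M j σ k) (pol (k + 1) (traj M j σ k))
          (traj M j σ (k + 1)) := by
  rw [Fin.prod_univ_succ]
  have h0 : traj (M + 1) i (Fin.cons j σ) ((0 : Fin (M+1)) : ℕ) = i := rfl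
  have h1 : traj (M + 1) i (Fin.cons j σ) (((0 : Fin (M+1)) : ℕ) + 1) = j := by
    have := traj_cons M i j σ 0 (Nat.zero_le M)
    simpa [traj] using this
  rw [h0, h1]
  congr 1
  apply Finset.prod_congr rfl
  intro k _
  have hk : (k : ℕ) ≤ M := le_of_lt k.isLt
  have hk1 : (k : ℕ) + 1 ≤ M := k.isLt
  have e1 : ((k.succ : Fin (M+1)) : ℕ) = (k : ℕ) + 1 := rfl
  rw [e1, traj_cons M i j σ k hk, traj_cons M i j σ ((k : ℕ) + 1) hk1]

lemma sum_cons' {S A : Type*} [Fintype A] (M : ℕ) (g : ℕ → S → A → S → ℝ)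
    (pol : ℕ → S → A) (i j : S) (σ : Fin M → S) :
    (∑ k : Fin (M + 1), g k (traj (M + 1) i (Fin.cons j σ) k)
        (pol k (traj (M + 1) i (Fin.cons j σ) k)) (traj (M + 1) i (Fin.cons j σ) (k + 1)))
      = g 0 i (pol 0 i) j +
        ∑ k : Fin M, g (k + 1) (traj M j σ k) (pol (k + 1) (traj M j σ k))
          (traj M j σ (k + 1)) := by
  rw [Fin.sum_univ_succ]
  have h0 : traj (M + 1) i (Fin.cons j σ) ((0 : Fin (M+1)) : ℕ) = i := rfl
  have h1 : traj (M + 1) i (Fin.cons j σ) (((0 : Fin (M+1)) : ℕ) + 1) = j := by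
    have := traj_cons M i j σ 0 (Nat.zero_le M)
    simpa [traj] using this
  rw [h0, h1]
  congr 1
  apply Finset.sum_congr rfl
  intro k _
  have hk : (k : ℕ) ≤ M := le_of_lt k.isLt
  have hk1 : (k : ℕ) + 1 ≤ M := k.isLt
  have e1 : ((k.succ : Fin (M+1)) : ℕ) = (k : ℕ) + 1 := rfl
  rw [e1, traj_cons M i j σ k hk, traj_cons M i j σ ((k : ℕ) + 1) hk1]

lemma sum_pi_succ {S : Type*} [Fintype S] (M : ℕ) (F : (Fin (M + 1) → S) → ℝ) :
    ∑ τ : Fin (M + 1) → S, F τ = ∑ j : S, ∑ σ : Fin M → S, F (Fin.cons j σ) := by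
  rw [← Equiv.sum_comp (Fin.consEquiv fun _ : Fin (M + 1) => S) F, Fintype.sum_prod_type]
  rfl

lemma prob_sum {S A : Type*} [Fintype S] [Fintype A] :
    ∀ (N : ℕ) (p : ℕ → S → A → S → ℝ),
      (∀ n < N, ∀ i a, ∑ j, p n i a j = 1) → ∀ (pol : ℕ → S → A) (i : S),
      ∑ τ : Fin N → S,
        ∏ k : Fin N, p k (traj N i τ k) (pol k (traj N i τ k)) (traj N i τ (k + 1)) = 1
  | 0, p, hp1, pol, i => by simp
  | (M + 1), p, hp1, pol, i => by
    rw [sum_pi_succ]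
    have : ∀ j : S, ∑ σ : Fin M → S,
        ∏ k : Fin M, p (k + 1) (traj M j σ k) (pol (k + 1) (traj M j σ k))
          (traj M j σ (k + 1)) = 1 := by
      intro j
      exact prob_sum M (fun n => p (n + 1))
        (fun n hn i a => hp1 (n + 1) (by omega) i a) (fun n => pol (n + 1)) j
    calc ∑ j : S, ∑ σ : Fin M → S,
          ∏ k : Fin (M + 1), p k (traj (M + 1) i (Fin.cons j σ) k)
            (pol k (traj (M + 1) i (Fin.cons j σ) k)) (traj (M + 1) i (Fin.cons j σ) (k + 1))
        = ∑ j : S, p 0 i (pol 0 i) j * ∑ σ : Fin M → S,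
            ∏ k : Fin M, p (k + 1) (traj M j σ k) (pol (k + 1) (traj M j σ k))
              (traj M j σ (k + 1)) := by
          refine Finset.sum_congr rfl fun j _ => ?_
          rw [Finset.mul_sum]
          exact Finset.sum_congr rfl fun σ _ => prod_cons' M p pol i j σ
      _ = 1 := by
          simp only [this, mul_one]
          exact hp1 0 (by omega) i (pol 0 i)

lemma J_succ {S A : Type*} [Fintype S] [DecidableEq S] [Fintype A] (M : ℕ)
    (p g : ℕ → S → A → S → ℝ) (gN : S → ℝ)
    (hp1 : ∀ n < M + 1, ∀ i a, ∑ j, p n i a j = 1)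
    (pol : ℕ → S → A) (i : S) :
    J (M + 1) p g gN pol i
      = ∑ j : S, p 0 i (pol 0 i) j * (g 0 i (pol 0 i) j
          + J M (fun n => p (n + 1)) (fun n => g (n + 1)) gN (fun n => pol (n + 1)) j) := by
  rw [J, sum_pi_succ]
  refine Finset.sum_congr rfl fun j _ => ?_
  have hT : ∀ σ : Fin M → S, traj (M + 1) i (Fin.cons j σ) (M + 1) = traj M j σ M :=
    fun σ => traj_cons M i j σ M le_rfl
  have key : ∀ σ : Fin M → S,
      (∏ k : Fin (M + 1), p k (traj (M + 1) i (Fin.cons j σ) k)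
          (pol k (traj (M + 1) i (Fin.cons j σ) k)) (traj (M + 1) i (Fin.cons j σ) (k + 1))) *
        ((∑ k : Fin (M + 1), g k (traj (M + 1) i (Fin.cons j σ) k)
          (pol k (traj (M + 1) i (Fin.cons j σ) k)) (traj (M + 1) i (Fin.cons j σ) (k + 1)))
          + gN (traj (M + 1) i (Fin.cons j σ) (M + 1)))
      = p 0 i (pol 0 i) j *
          ((∏ k : Fin M, p (k + 1) (traj M j σ k) (pol (k + 1) (traj M j σ k))
              (traj M j σ (k + 1)))
            * (g 0 i (pol 0 i) j
              + ((∑ k : Fin M, g (k + 1) (traj M j σ k) (pol (k + 1) (traj M j σ k))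
                  (traj M j σ (k + 1))) + gN (traj M j σ M)))) := by
    intro σ
    rw [prod_cons' M p pol i j σ, sum_cons' M g pol i j σ, hT σ]
    ring
  rw [Finset.sum_congr rfl fun σ _ => key σ, ← Finset.mul_sum]
  congr 1
  have hps : ∑ σ : Fin M → S,
      ∏ k : Fin M, p (k + 1) (traj M j σ k) (pol (k + 1) (traj M j σ k))
        (traj M j σ (k + 1)) = 1 :=
    prob_sum M (fun n => p (n + 1)) (fun n hn i a => hp1 (n + 1) (by omega) i a)
      (fun n => pol (n + 1)) j
  calc ∑ σ : Fin M → S, _ = ∑ σ : Fin M → S,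
        ((∏ k : Fin M, p (k + 1) (traj M j σ k) (pol (k + 1) (traj M j σ k))
            (traj M j σ (k + 1))) * g 0 i (pol 0 i) j
          + (∏ k : Fin M, p (k + 1) (traj M j σ k) (pol (k + 1) (traj M j σ k))
              (traj M j σ (k + 1))) *
            ((∑ k : Fin M, g (k + 1) (traj M j σ k) (pol (k + 1) (traj M j σ k))
                (traj M j σ (k + 1))) + gN (traj M j σ M))) := by
        exact Finset.sum_congr rfl fun σ _ => by ring
    _ = g 0 i (pol 0 i) j + J M (fun n => p (n + 1)) (fun n => g (n + 1)) gN
          (fun n => pol (n + 1)) j := by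
        rw [Finset.sum_add_distrib, ← Finset.sum_mul, hps, one_mul, J]

lemma bdd_Q {S A : Type*} [Fintype A] [Nonempty A] (Q : ℕ → S → A → ℝ) (k : ℕ) (s : S) :
    BddBelow (Set.range fun b => Q k s b) := (Set.finite_range _).bddBelow

lemma J_ge {S A : Type*} [Fintype S] [DecidableEq S] [Fintype A] [Nonempty A] :
    ∀ (N : ℕ) (p g : ℕ → S → A → S → ℝ) (gN : S → ℝ),
      (∀ n < N, ∀ i a j, 0 ≤ p n i a j) →
      (∀ n < N, ∀ i a, ∑ j, p n i a j = 1) →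
      ∀ (Q : ℕ → S → A → ℝ),
      (∀ s a, Q N s a = gN s) →
      (∀ k < N, ∀ s a, Q k s a = ∑ j, p k s a j * (g k s a j + ⨅ b, Q (k + 1) j b)) →
      ∀ (pol : ℕ → S → A) (i : S), (⨅ b, Q 0 i b) ≤ J N p g gN pol i
  | 0, p, g, gN, hp0, hp1, Q, hQN, hQrec, pol, i => by
    rw [J_zero]
    have : ∀ b : A, Q 0 i b = gN i := fun b => hQN i b
    refine le_of_eq ?_
    calc (⨅ b, Q 0 i b) = ⨅ _ : A, gN i := by simp only [this]
      _ = gN i := ciInf_const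
  | (M + 1), p, g, gN, hp0, hp1, Q, hQN, hQrec, pol, i => by
    rw [J_succ M p g gN hp1 pol i]
    have IH : ∀ j : S, (⨅ b, Q 1 j b) ≤ J M (fun n => p (n + 1)) (fun n => g (n + 1)) gN
        (fun n => pol (n + 1)) j := by
      intro j
      exact J_ge M (fun n => p (n + 1)) (fun n => g (n + 1)) gN
        (fun n hn => hp0 (n + 1) (by omega)) (fun n hn => hp1 (n + 1) (by omega))
        (fun k => Q (k + 1)) (fun s a => hQN s a)
        (fun k hk s a => hQrec (k + 1) (by omega) s a) (fun n => pol (n + 1)) j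
    have step : Q 0 i (pol 0 i) ≤ ∑ j : S, p 0 i (pol 0 i) j * (g 0 i (pol 0 i) j
        + J M (fun n => p (n + 1)) (fun n => g (n + 1)) gN (fun n => pol (n + 1)) j) := by
      rw [hQrec 0 (by omega) i (pol 0 i)]
      refine Finset.sum_le_sum fun j _ => ?_
      exact mul_le_mul_of_nonneg_left (add_le_add le_rfl (IH j))
        (hp0 0 (by omega) i (pol 0 i) j)
    exact le_trans (ciInf_le (bdd_Q Q 0 i) (pol 0 i)) step

lemma J_greedy {S A : Type*} [Fintype S] [DecidableEq S] [Fintype A] [Nonempty A] :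
    ∀ (N : ℕ) (p g : ℕ → S → A → S → ℝ) (gN : S → ℝ),
      (∀ n < N, ∀ i a, ∑ j, p n i a j = 1) →
      ∀ (Q : ℕ → S → A → ℝ),
      (∀ s a, Q N s a = gN s) →
      (∀ k < N, ∀ s a, Q k s a = ∑ j, p k s a j * (g k s a j + ⨅ b, Q (k + 1) j b)) →
      ∀ (pol : ℕ → S → A), (∀ k s b, Q k s (pol k s) ≤ Q k s b) →
      ∀ i : S, J N p g gN pol i = ⨅ b, Q 0 i b
  | 0, p, g, gN, hp1, Q, hQN, hQrec, pol, hgr, i => by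
    rw [J_zero]
    have : ∀ b : A, Q 0 i b = gN i := fun b => hQN i b
    calc gN i = ⨅ _ : A, gN i := ciInf_const.symm
      _ = ⨅ b, Q 0 i b := by simp only [this]
  | (M + 1), p, g, gN, hp1, Q, hQN, hQrec, pol, hgr, i => by
    rw [J_succ M p g gN hp1 pol i]
    have IH : ∀ j : S, J M (fun n => p (n + 1)) (fun n => g (n + 1)) gN
        (fun n => pol (n + 1)) j = ⨅ b, Q 1 j b := by
      intro j
      exact J_greedy M (fun n => p (n + 1)) (fun n => g (n + 1)) gN
        (fun n hn => hp1 (n + 1) (by omega))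
        (fun k => Q (k + 1)) (fun s a => hQN s a)
        (fun k hk s a => hQrec (k + 1) (by omega) s a) (fun n => pol (n + 1))
        (fun k s b => hgr (k + 1) s b) j
    have : ∑ j : S, p 0 i (pol 0 i) j * (g 0 i (pol 0 i) j
        + J M (fun n => p (n + 1)) (fun n => g (n + 1)) gN (fun n => pol (n + 1)) j)
        = Q 0 i (pol 0 i) := by
      rw [hQrec 0 (by omega) i (pol 0 i)]
      exact Finset.sum_congr rfl fun j _ => by rw [IH j]
    rw [this]
    exact le_antisymm (le_ciInf fun b => hgr 0 i b) (ciInf_le (bdd_Q Q 0 i) (pol 0 i))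

/-- the optimal expected total cost from any initial state `i` equals the
minimum over initial actions of the stage-0 DP Q-values. -/
theorem optimal_cost_eq_min_dpQ {S A : Type*} [Fintype S] [DecidableEq S] [Nonempty S]
    [Fintype A] [Nonempty A]
    (N : ℕ) (hN : 1 ≤ N)
    (p g : ℕ → S → A → S → ℝ) (gN : S → ℝ)
    (hp0 : ∀ n < N, ∀ i a j, 0 ≤ p n i a j)
    (hp1 : ∀ n < N, ∀ i a, ∑ j, p n i a j = 1)
    (Q : ℕ → S → A → ℝ)
    (hQN : ∀ s a, Q N s a = gN s)
    (hQrec : ∀ k < N, ∀ s a,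
      Q k s a = ∑ j, p k s a j * (g k s a j + ⨅ b, Q (k + 1) j b))
    (i : S) :
    (⨅ pol : ℕ → S → A, J N p g gN pol i) = ⨅ a : A, Q 0 i a := by
  have hlb : ∀ pol : ℕ → S → A, (⨅ b, Q 0 i b) ≤ J N p g gN pol i :=
    fun pol => J_ge N p g gN hp0 hp1 Q hQN hQrec pol i
  have hbdd : BddBelow (Set.range fun pol : ℕ → S → A => J N p g gN pol i) := by
    refine ⟨⨅ b, Q 0 i b, ?_⟩
    rintro x ⟨pol, rfl⟩
    exact hlb pol
  have hex : ∀ k s, ∃ a : A, ∀ b, Q k s a ≤ Q k s b := fun k s =>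
    Finite.exists_min (fun a => Q k s a)
  choose pol hpol using hex
  refine le_antisymm ?_ (le_ciInf hlb)
  calc (⨅ pol : ℕ → S → A, J N p g gN pol i) ≤ J N p g gN pol i := ciInf_le hbdd pol
    _ = ⨅ b, Q 0 i b := J_greedy N p g gN hp1 Q hQN hQrec pol hpol i


end
end

section
/- The finite-horizon Q-learning iterates converge to the optimal Q-values: almost surely, Q^m → Q* as m → ∞, where Q* is the DP solution defined by Q*_N(s,a) = g_N(s) and Q*_k(s,a) = Σ_{j∈S} p_k(s,a,j)(g_k(s,a,j) + min_{b∈A} Q*_{k+1}(j,b)) for k = N−1,…,0. -/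
/-!
Backward induction on the stage `n`; at the horizon the iterates equal `g_N` from the first step
on. For `n < N` the update reads `Q^{m+1}_n = Q^m_n + a(m) (Q*_n + ξ_m + δ_m - Q^m_n)`, where
`ξ_m = g_n(i,a,η) + min_b Q*_{n+1}(η,b) - Q*_n(i,a)` is an independent, finitely-valued noise,
centred by the DP equation, and `δ_m → 0` almost surely by the induction hypothesis because `S` is
finite. Since `Σ a(m)² < ∞`, the partial sums of `Σ a(m) ξ_m` form an `L²`-bounded martingale, so
the series converges almost surely. Subtracting these partial sums leaves a deterministic averaging
recursion `x_{m+1} = x_m + a(m) (b_m - x_m)` with `b_m → Q*_n(i,a)`, which converges to the same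
limit because `Σ a(m) = ∞`.
-/

open Finset MeasureTheory ProbabilityTheory Filter

noncomputable section

/-- The finite-horizon Q-learning iterates `Q^m_n(i,a)(ω)`.
`Qiter N g gN step η Q0 m n i a ω = Q^m_n(i,a)(ω)`, defined by
`Q^0 = Q0` and, for `n < N`,
`Q^{m+1}_n(i,a) = Q^m_n(i,a) + a(m)(g_n(i,a,η_n^m(i,a)) + min_b Q^m_{n+1}(η_n^m(i,a),b) − Q^m_n(i,a))`,
with `Q^{m+1}_N(i,a) = g_N(i)`. -/
def Qiter {S A Ω : Type*} [Fintype A] [Nonempty A] (N : ℕ)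
    (g : ℕ → S → A → S → ℝ) (gN : S → ℝ) (step : ℕ → ℝ)
    (η : ℕ → Fin N → S → A → Ω → S) (Q0 : ℕ → S → A → ℝ) :
    ℕ → ℕ → S → A → Ω → ℝ
  | 0, n, i, a, _ => Q0 n i a
  | m + 1, n, i, a, ω =>
      if h : n < N then
        Qiter N g gN step η Q0 m n i a ω +
          step m * (g n i a (η m ⟨n, h⟩ i a ω) +
            (⨅ b : A, Qiter N g gN step η Q0 m (n + 1) (η m ⟨n, h⟩ i a ω) b ω) -
            Qiter N g gN step η Q0 m n i a ω)
      else gN i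

/-- The Q-learning noise `M^{m+1}_n(i,a)(ω)` (with `Mnoise … m` denoting `M^{m+1}`):
for `n < N` it equals
`g_n(i,a,η_n^m(i,a)) + min_b Q^m_{n+1}(η_n^m(i,a),b)
  − Σ_j p_n(i,a,j)(g_n(i,a,j) + min_b Q^m_{n+1}(j,b))`,
and it vanishes for `n = N`. -/
def Mnoise {S A Ω : Type*} [Fintype S] [Fintype A] [Nonempty A] (N : ℕ)
    (p g : ℕ → S → A → S → ℝ) (gN : S → ℝ) (step : ℕ → ℝ)
    (η : ℕ → Fin N → S → A → Ω → S) (Q0 : ℕ → S → A → ℝ)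
    (m n : ℕ) (i : S) (a : A) (ω : Ω) : ℝ :=
  if h : n < N then
    g n i a (η m ⟨n, h⟩ i a ω) +
      (⨅ b : A, Qiter N g gN step η Q0 m (n + 1) (η m ⟨n, h⟩ i a ω) b ω) -
      ∑ j, p n i a j * (g n i a j + ⨅ b : A, Qiter N g gN step η Q0 m (n + 1) j b ω)
  else 0

/-- The σ-algebra `F_m` generated by the samples `η_{n'}^l(i',a')` for `l < m`. -/
def filt {S A Ω : Type*} [MeasurableSpace S] (N : ℕ)
    (η : ℕ → Fin N → S → A → Ω → S) (m : ℕ) : MeasurableSpace Ω :=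
  ⨆ (l : ℕ) (_ : l < m) (n : Fin N) (i : S) (a : A),
    MeasurableSpace.comap (η l n i a) inferInstance

open Topology

theorem tendsto_zero_of_succ_le_exp_neg_mul {a z : ℕ → ℝ} (hz0 : ∀ m, 0 ≤ z m)
    (hz : ∀ᶠ m in atTop, z (m + 1) ≤ Real.exp (-a m) * z m)
    (ha : Tendsto (fun M => ∑ m ∈ range M, a m) atTop atTop) :
    Tendsto z atTop (𝓝 0) := by
  obtain ⟨M, hM⟩ := eventually_atTop.1 hz
  set s : ℕ → ℝ := fun M => ∑ m ∈ range M, a m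
  have hdecay : ∀ k, z (M + k) * Real.exp (s (M + k)) ≤ z M * Real.exp (s M) := by
    intro k
    induction k with
    | zero => rfl
    | succ k ih =>
      calc z (M + (k + 1)) * Real.exp (s (M + (k + 1)))
          = z (M + k + 1) * Real.exp (a (M + k)) * Real.exp (s (M + k)) := by
            simp only [s, ← add_assoc, sum_range_succ, Real.exp_add]; ring
        _ ≤ z (M + k) * Real.exp (s (M + k)) := by
            gcongr
            calc z (M + k + 1) * Real.exp (a (M + k))
                ≤ Real.exp (-a (M + k)) * z (M + k) * Real.exp (a (M + k)) := by
                  gcongr; exact hM _ (Nat.le_add_right _ _)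
              _ = z (M + k) := by rw [mul_comm, ← mul_assoc, ← Real.exp_add]; simp
        _ ≤ z M * Real.exp (s M) := ih
  have hexp : Tendsto (fun m => z M * Real.exp (s M) * Real.exp (-s m)) atTop (𝓝 0) := by
    simpa using (Real.tendsto_exp_atBot.comp (tendsto_neg_atTop_atBot.comp ha)).const_mul
      (z M * Real.exp (s M))
  refine squeeze_zero' (Eventually.of_forall hz0) ?_ hexp
  filter_upwards [eventually_ge_atTop M] with m hm
  obtain ⟨k, rfl⟩ := Nat.exists_eq_add_of_le hm
  rw [Real.exp_neg, ← div_eq_mul_inv, le_div_iff₀ (Real.exp_pos _)]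
  exact hdecay k

theorem tendsto_of_succ_eq_add_mul_sub {a b x : ℕ → ℝ} {c : ℝ} (ha0 : ∀ m, 0 ≤ a m)
    (ha1 : ∀ᶠ m in atTop, a m ≤ 1) (ha : Tendsto (fun M => ∑ m ∈ range M, a m) atTop atTop)
    (hb : Tendsto b atTop (𝓝 c)) (hx : ∀ m, x (m + 1) = x m + a m * (b m - x m)) :
    Tendsto x atTop (𝓝 c) := by
  rw [Metric.tendsto_nhds]
  intro ε hε
  -- the excess of `|x m - c|` over `ε / 2` contracts by the factor `1 - a m`
  set z : ℕ → ℝ := fun m => max (|x m - c| - ε / 2) 0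
  have hz : ∀ᶠ m in atTop, z (m + 1) ≤ Real.exp (-a m) * z m := by
    filter_upwards [ha1, Metric.tendsto_nhds.1 hb (ε / 2) (half_pos hε)] with m ha1 hbm
    rw [Real.dist_eq] at hbm
    have hcontract : |x (m + 1) - c| ≤ (1 - a m) * |x m - c| + a m * (ε / 2) := by
      calc |x (m + 1) - c| = |(1 - a m) * (x m - c) + a m * (b m - c)| := by rw [hx]; ring_nf
        _ ≤ (1 - a m) * |x m - c| + a m * |b m - c| := by
            grw [abs_add_le, abs_mul, abs_mul, abs_of_nonneg (sub_nonneg.2 ha1),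
              abs_of_nonneg (ha0 m)]
        _ ≤ (1 - a m) * |x m - c| + a m * (ε / 2) := by gcongr; exact ha0 m
    calc z (m + 1) ≤ (1 - a m) * z m :=
          max_le (by nlinarith [le_max_left (|x m - c| - ε / 2) 0])
            (mul_nonneg (sub_nonneg.2 ha1) (le_max_right _ _))
      _ ≤ Real.exp (-a m) * z m := by
          gcongr
          linarith [Real.add_one_le_exp (-a m)]
  have hz0 : ∀ m, 0 ≤ z m := fun m => le_max_right _ _
  filter_upwards [(tendsto_zero_of_succ_le_exp_neg_mul hz0 hz ha).eventually
    (gt_mem_nhds (half_pos hε))] with m hm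
  rw [Real.dist_eq]
  linarith [le_max_left (|x m - c| - ε / 2) 0]

theorem tendsto_of_succ_eq_add_mul_sub_of_tendsto_sum {a x y ξ : ℕ → ℝ} {c L : ℝ}
    (ha0 : ∀ m, 0 ≤ a m) (ha1 : ∀ᶠ m in atTop, a m ≤ 1)
    (ha : Tendsto (fun M => ∑ m ∈ range M, a m) atTop atTop)
    (hξ : Tendsto (fun M => ∑ m ∈ range M, a m * ξ m) atTop (𝓝 L))
    (hy : Tendsto (fun m => y m - ξ m) atTop (𝓝 c))
    (hx : ∀ m, x (m + 1) = x m + a m * (y m - x m)) :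
    Tendsto x atTop (𝓝 c) := by
  set s : ℕ → ℝ := fun M => ∑ m ∈ range M, a m * ξ m
  -- subtracting the accumulated noise leaves a noise-free recursion
  have hu : Tendsto (fun m => x m - s m) atTop (𝓝 (c - L)) := by
    refine tendsto_of_succ_eq_add_mul_sub ha0 ha1 ha (hy.sub hξ) fun m => ?_
    simp only [s, sum_range_succ, hx]
    ring
  simpa using hu.add hξ

section Kolmogorov

variable {Ω : Type*} [MeasurableSpace Ω] {P : Measure Ω} [IsProbabilityMeasure P]

theorem eLpNorm_one_le_of_integral_eq_zero {f : Ω → ℝ} (hf : MemLp f 2 P) (h0 : P[f] = 0) :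
    eLpNorm f 1 P ≤ ENNReal.ofReal ((1 + Var[f; P]) / 2) := by
  have hint : Integrable f P := hf.integrable one_le_two
  rw [eLpNorm_one_eq_lintegral_enorm, ← ofReal_integral_norm_eq_lintegral_enorm hint,
    variance_of_integral_eq_zero hf.aemeasurable h0]
  refine ENNReal.ofReal_le_ofReal ?_
  calc ∫ ω, ‖f ω‖ ∂P ≤ ∫ ω, (1 + f ω ^ 2) / 2 ∂P := by
        refine integral_mono hint.norm ((integrable_const 1).add hf.integrable_sq |>.div_const 2)
          fun ω => ?_
        nlinarith [sq_nonneg (|f ω| - 1), sq_abs (f ω), Real.norm_eq_abs (f ω)]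
    _ = (1 + ∫ ω, f ω ^ 2 ∂P) / 2 := by
        rw [integral_div, integral_add (integrable_const 1) hf.integrable_sq]
        simp

theorem martingale_sum_range_succ_of_iIndepFun {X : ℕ → Ω → ℝ} (hmeas : ∀ m, Measurable (X m))
    (hint : ∀ m, Integrable (X m) P) (hmean : ∀ m, P[X m] = 0) (hind : iIndepFun X P) :
    Martingale (fun M => ∑ m ∈ range (M + 1), X m)
      (Filtration.natural X fun m => (hmeas m).stronglyMeasurable) P := by
  set 𝒢 := Filtration.natural X fun m => (hmeas m).stronglyMeasurable
  have hadapted : StronglyAdapted 𝒢 fun M => ∑ m ∈ range (M + 1), X m := fun M =>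
    Finset.stronglyMeasurable_sum _ fun m hm =>
      (Filtration.stronglyAdapted_natural _ m).mono
        (𝒢.mono (Nat.lt_succ_iff.1 (mem_range.1 hm)))
  refine martingale_of_condExp_sub_eq_zero_nat hadapted
    (fun M => integrable_finsetSum' _ fun m _ => hint m) fun M => ?_
  rw [sum_range_succ _ (M + 1), add_sub_cancel_left]
  have hindep : Indep (MeasurableSpace.comap (X (M + 1)) inferInstance) (𝒢 M) P := by
    have h := indep_iSup_of_disjoint (fun m => (hmeas m).comap_le) hind.iIndep
      (S := {M + 1}) (T := Set.Iic M) (by simp)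
    simp only [Set.mem_singleton_iff, iSup_iSup_eq_left, Set.mem_Iic] at h
    exact h
  calc P[X (M + 1)|𝒢 M] =ᵐ[P] fun _ => P[X (M + 1)] :=
        condExp_indep_eq (hmeas _).comap_le (𝒢.le M)
          (comap_measurable (X (M + 1))).stronglyMeasurable hindep
    _ = 0 := by rw [hmean]; rfl

theorem ae_exists_tendsto_sum_of_iIndepFun {X : ℕ → Ω → ℝ} (hmeas : ∀ m, Measurable (X m))
    (hL2 : ∀ m, MemLp (X m) 2 P) (hmean : ∀ m, P[X m] = 0) (hind : iIndepFun X P)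
    (hvar : Summable fun m => Var[X m; P]) :
    ∀ᵐ ω ∂P, ∃ L, Tendsto (fun M => ∑ m ∈ range M, X m ω) atTop (𝓝 L) := by
  have hmart := martingale_sum_range_succ_of_iIndepFun hmeas
    (fun m => (hL2 m).integrable one_le_two) hmean hind
  have hbdd : ∀ M, eLpNorm (∑ m ∈ range (M + 1), X m) 1 P
      ≤ ((1 + ∑' m, Var[X m; P]) / 2).toNNReal := by
    intro M
    refine (eLpNorm_one_le_of_integral_eq_zero (memLp_finsetSum' _ fun m _ => hL2 m) ?_).trans
      (ENNReal.ofReal_le_ofReal ?_)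
    · simp only [Finset.sum_apply]
      rw [integral_finsetSum _ fun m _ => (hL2 m).integrable one_le_two]
      simp [hmean]
    · rw [IndepFun.variance_sum (fun m _ => hL2 m)
        fun i _ j _ hij => hind.indepFun hij]
      gcongr
      exact hvar.sum_le_tsum _ fun m _ => variance_nonneg _ _
  filter_upwards [hmart.submartingale.ae_tendsto_limitProcess hbdd] with ω hω
  simp only [Finset.sum_apply] at hω
  exact ⟨_, (tendsto_add_atTop_iff_nat 1).1 hω⟩

end Kolmogorov

section FiniteState

variable {Ω : Type*} [MeasurableSpace Ω] {P : Measure Ω} [IsProbabilityMeasure P]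
  {S : Type*} [Fintype S] [MeasurableSpace S] [MeasurableSingletonClass S]

theorem integral_comp_eq_sum {X : Ω → S} (hX : Measurable X) {q : S → ℝ} (hq : ∀ j, 0 ≤ q j)
    (hdist : ∀ j, P {ω | X ω = j} = ENNReal.ofReal (q j)) (F : S → ℝ) :
    ∫ ω, F (X ω) ∂P = ∑ j, q j * F j := by
  rw [← integral_map hX.aemeasurable (measurable_of_countable F).aestronglyMeasurable,
    integral_fintype Integrable.of_finite]
  refine sum_congr rfl fun j _ => ?_
  rw [measureReal_def, Measure.map_apply hX (measurableSet_singleton j)]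
  simp only [Set.preimage, Set.mem_singleton_iff]
  rw [hdist, ENNReal.toReal_ofReal (hq j), smul_eq_mul]

theorem ae_exists_tendsto_sum_mul_sub_of_iIndepFun {X : ℕ → Ω → S}
    (hX : ∀ m, Measurable (X m)) (hind : iIndepFun X P) {q : S → ℝ} (hq : ∀ j, 0 ≤ q j)
    (hdist : ∀ m j, P {ω | X m ω = j} = ENNReal.ofReal (q j)) (F : S → ℝ) {a : ℕ → ℝ}
    (ha : Summable fun m => a m ^ 2) :
    ∀ᵐ ω ∂P, ∃ L, Tendsto (fun M => ∑ m ∈ range M, a m * (F (X m ω) - ∑ j, q j * F j))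
      atTop (𝓝 L) := by
  set c := ∑ j, q j * F j
  set h : ℕ → S → ℝ := fun m s => a m * (F s - c)
  set Y : ℕ → Ω → ℝ := fun m => h m ∘ X m
  have hmeas : ∀ m, Measurable (Y m) := fun m => (measurable_of_countable (h m)).comp (hX m)
  have hL2 : ∀ m, MemLp (Y m) 2 P := fun m =>
    (MemLp.of_discrete (μ := P.map (X m))).comp_of_map (hX m).aemeasurable
  have hmean : ∀ m, P[Y m] = 0 := fun m => by
    have hF : Integrable (fun ω => F (X m ω)) P :=
      (MemLp.of_discrete (μ := P.map (X m))).integrable le_rfl |>.comp_measurable (hX m)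
    simp only [Y, h, Function.comp_def]
    rw [integral_const_mul, integral_sub hF (integrable_const c), integral_const,
      integral_comp_eq_sum (hX m) hq (hdist m)]
    simp [c]
  have hvar : ∀ m, Var[Y m; P] = a m ^ 2 * ∑ j, q j * (F j - c) ^ 2 := fun m => by
    rw [variance_of_integral_eq_zero (hmeas m).aemeasurable (hmean m)]
    calc ∫ ω, Y m ω ^ 2 ∂P = ∑ j, q j * h m j ^ 2 :=
          integral_comp_eq_sum (hX m) hq (hdist m) fun s => h m s ^ 2
      _ = a m ^ 2 * ∑ j, q j * (F j - c) ^ 2 := by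
          rw [mul_sum]
          exact sum_congr rfl fun j _ => by simp only [h]; ring
  exact ae_exists_tendsto_sum_of_iIndepFun hmeas hL2 hmean
    (hind.comp h fun m => measurable_of_countable (h m))
    ((ha.mul_right _).congr fun m => (hvar m).symm)

end FiniteState

theorem tendsto_iInf_of_forall_tendsto {ι A : Type*} [Fintype A] [Nonempty A] {l : Filter ι}
    {f : ι → A → ℝ} {g : A → ℝ} (h : ∀ b, Tendsto (fun m => f m b) l (𝓝 (g b))) :
    Tendsto (fun m => ⨅ b, f m b) l (𝓝 (⨅ b, g b)) := by
  have hinf : ∀ v : A → ℝ, ⨅ b, v b = univ.inf' univ_nonempty v := fun v => by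
    rw [inf'_eq_csInf_image, coe_univ, Set.image_univ, iInf]
  simp only [hinf]
  exact Tendsto.finset_inf'_nhds_apply univ_nonempty fun b _ => h b

theorem tendsto_apply_sub_apply_of_forall_tendsto {ι S : Type*} [Fintype S] {l : Filter ι}
    {f : ι → S → ℝ} {g : S → ℝ} (h : ∀ j, Tendsto (fun m => f m j) l (𝓝 (g j))) (s : ι → S) :
    Tendsto (fun m => f m (s m) - g (s m)) l (𝓝 0) :=
  squeeze_zero_norm (fun m => norm_le_pi_norm (f m - g) (s m))
    (tendsto_iff_norm_sub_tendsto_zero.1 (tendsto_pi_nhds.2 h))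

section QLearning

variable {S A Ω : Type*} [Fintype A] [Nonempty A] {N : ℕ} {g : ℕ → S → A → S → ℝ}
  {gN : S → ℝ} {step : ℕ → ℝ} {η : ℕ → Fin N → S → A → Ω → S} {Q0 : ℕ → S → A → ℝ}

theorem Qiter_succ_of_lt {n : ℕ} (hn : n < N) (m : ℕ) (i : S) (a : A) (ω : Ω) :
    Qiter N g gN step η Q0 (m + 1) n i a ω = Qiter N g gN step η Q0 m n i a ω +
      step m * (g n i a (η m ⟨n, hn⟩ i a ω) +
        (⨅ b, Qiter N g gN step η Q0 m (n + 1) (η m ⟨n, hn⟩ i a ω) b ω) -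
        Qiter N g gN step η Q0 m n i a ω) := by
  rw [Qiter, dif_pos hn]

theorem tendsto_Qiter_horizon (i : S) (a : A) (ω : Ω) :
    Tendsto (fun m => Qiter N g gN step η Q0 m N i a ω) atTop (𝓝 (gN i)) := by
  refine (tendsto_add_atTop_iff_nat 1).1 (tendsto_const_nhds.congr fun m => ?_)
  rw [Qiter, dif_neg (lt_irrefl N)]

theorem tendsto_Qiter_of_tendsto_succ [Fintype S] {n : ℕ} (hn : n < N) {V : S → A → ℝ}
    {c L : ℝ} {i : S} {a : A} {ω : Ω} (hstep : ∀ m, 0 ≤ step m)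
    (hstep_le : ∀ᶠ m in atTop, step m ≤ 1)
    (hstep_sum : Tendsto (fun M => ∑ m ∈ range M, step m) atTop atTop)
    (hsucc : ∀ j b, Tendsto (fun m => Qiter N g gN step η Q0 m (n + 1) j b ω) atTop (𝓝 (V j b)))
    (hnoise : Tendsto (fun M => ∑ m ∈ range M,
      step m * (g n i a (η m ⟨n, hn⟩ i a ω) + (⨅ b, V (η m ⟨n, hn⟩ i a ω) b) - c)) atTop (𝓝 L)) :
    Tendsto (fun m => Qiter N g gN step η Q0 m n i a ω) atTop (𝓝 c) := by
  refine tendsto_of_succ_eq_add_mul_sub_of_tendsto_sum hstep hstep_le hstep_sum hnoise ?_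
    (Qiter_succ_of_lt hn · i a ω)
  have hmin := tendsto_apply_sub_apply_of_forall_tendsto
    (fun j => tendsto_iInf_of_forall_tendsto (hsucc j)) (η · ⟨n, hn⟩ i a ω)
  convert hmin.const_add c using 2 <;> ring

end QLearning

theorem q_learning_converges_to_optimal_general
    {S A Ω : Type*} [Fintype S] [MeasurableSpace S]
    [MeasurableSingletonClass S] [Fintype A] [Nonempty A] [MeasurableSpace Ω]
    (N : ℕ)
    (p g : ℕ → S → A → S → ℝ) (gN : S → ℝ)
    (hp0 : ∀ n < N, ∀ i a j, 0 ≤ p n i a j)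
    (P : Measure Ω) [IsProbabilityMeasure P]
    (η : ℕ → Fin N → S → A → Ω → S)
    (hmeas : ∀ m n i a, Measurable (η m n i a))
    (hdist : ∀ (m : ℕ) (n : Fin N) (i : S) (a : A) (j : S),
      P {ω | η m n i a ω = j} = ENNReal.ofReal (p n i a j))
    (hindep : iIndepFun
      (fun x : ℕ × Fin N × S × A => η x.1 x.2.1 x.2.2.1 x.2.2.2) P)
    (step : ℕ → ℝ) (hstep : ∀ m, 0 < step m)
    (hstep_sum : Tendsto (fun M => ∑ m ∈ Finset.range M, step m) atTop atTop)
    (hstep_sq : Summable (fun m => (step m) ^ 2))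
    (Q0 : ℕ → S → A → ℝ)
    (Qs : ℕ → S → A → ℝ)
    (hQsN : ∀ i a, Qs N i a = gN i)
    (hQsrec : ∀ k < N, ∀ i a,
      Qs k i a = ∑ j, p k i a j * (g k i a j + ⨅ b : A, Qs (k + 1) j b)) :
    ∀ᵐ ω ∂P, ∀ n : ℕ, n ≤ N → ∀ (i : S) (a : A),
      Tendsto (fun m => Qiter N g gN step η Q0 m n i a ω) atTop (nhds (Qs n i a)) := by
  set E : ℕ → Prop := fun n => ∀ᵐ ω ∂P, ∀ i a,
    Tendsto (fun m => Qiter N g gN step η Q0 m n i a ω) atTop (𝓝 (Qs n i a))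
  have hstep_le : ∀ᶠ m in atTop, step m ≤ 1 := by
    filter_upwards [hstep_sq.tendsto_atTop_zero.eventually (gt_mem_nhds one_pos)] with m hm
    nlinarith [hstep m]
  have hhorizon : E N := ae_of_all _ fun ω i a => hQsN i a ▸ tendsto_Qiter_horizon i a ω
  have hstage : ∀ n (hn : n < N), E (n + 1) → E n := by
    intro n hn hsucc
    have hnoise := fun i a => ae_exists_tendsto_sum_mul_sub_of_iIndepFun (hmeas · ⟨n, hn⟩ i a)
      (hindep.precomp (g := fun m => (m, ⟨n, hn⟩, i, a)) fun m m' h => congrArg Prod.fst h)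
      (hp0 n hn i a) (hdist · _ i a) (fun j => g n i a j + ⨅ b, Qs (n + 1) j b) hstep_sq
    filter_upwards [hsucc, ae_all_iff.2 fun i => ae_all_iff.2 (hnoise i)] with ω hsucc hnoise i a
    obtain ⟨L, hL⟩ := hnoise i a
    rw [hQsrec n hn i a]
    exact tendsto_Qiter_of_tendsto_succ hn (fun m => (hstep m).le) hstep_le hstep_sum hsucc hL
  exact ae_all_iff.2 fun n => eventually_imp_distrib_left.2 fun hn =>
    Nat.decreasingInduction (motive := fun n _ => E n) hstage hhorizon hn

/-- the finite-horizon Q-learning iterates converge almost surely to the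
optimal Q-values `Q*`, the solution of the DP backward recursion. -/
theorem q_learning_converges_to_optimal
    {S A Ω : Type*} [Fintype S] [Nonempty S] [MeasurableSpace S]
    [MeasurableSingletonClass S] [Fintype A] [Nonempty A] [MeasurableSpace Ω]
    (N : ℕ) (hN : 1 ≤ N)
    (p g : ℕ → S → A → S → ℝ) (gN : S → ℝ)
    (hp0 : ∀ n < N, ∀ i a j, 0 ≤ p n i a j)
    (hp1 : ∀ n < N, ∀ i a, ∑ j, p n i a j = 1)
    (P : Measure Ω) [IsProbabilityMeasure P]
    (η : ℕ → Fin N → S → A → Ω → S)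
    (hmeas : ∀ m n i a, Measurable (η m n i a))
    (hdist : ∀ (m : ℕ) (n : Fin N) (i : S) (a : A) (j : S),
      P {ω | η m n i a ω = j} = ENNReal.ofReal (p n i a j))
    (hindep : iIndepFun
      (fun x : ℕ × Fin N × S × A => η x.1 x.2.1 x.2.2.1 x.2.2.2) P)
    (step : ℕ → ℝ) (hstep : ∀ m, 0 < step m)
    (hstep_sum : Tendsto (fun M => ∑ m ∈ Finset.range M, step m) atTop atTop)
    (hstep_sq : Summable (fun m => (step m) ^ 2))
    (Q0 : ℕ → S → A → ℝ) (hQ0N : ∀ i a, Q0 N i a = gN i)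
    (Qs : ℕ → S → A → ℝ)
    (hQsN : ∀ i a, Qs N i a = gN i)
    (hQsrec : ∀ k < N, ∀ i a,
      Qs k i a = ∑ j, p k i a j * (g k i a j + ⨅ b : A, Qs (k + 1) j b)) :
    ∀ᵐ ω ∂P, ∀ n : ℕ, n ≤ N → ∀ (i : S) (a : A),
      Tendsto (fun m => Qiter N g gN step η Q0 m n i a ω) atTop (nhds (Qs n i a)) :=
  q_learning_converges_to_optimal_general N p g gN hp0 P η hmeas hdist hindep step hstep hstep_sum
    hstep_sq Q0 Qs hQsN hQsrec

end
end
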